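/- Let X and Y be Hausdorff topological spaces with Cantor–Bendixson rank n+1 and m+1 respectively, i.e. X^(n) ≠ X^(n+1) = X^(n+2) and Y^(m) ≠ Y^(m+1) = Y^(m+2), where n, m ∈ ℕ. Then the product X × Y has Cantor–Bendixson rank n+m+1, i.e. (X × Y)^(n+m) ≠ (X × Y)^(n+m+1) = (X × Y)^(n+m+2). -/

import Mathlib

open Filter Topology

private lemma derivedSet_empty' {Z : Type*} [TopologicalSpace Z] :
    derivedSet (∅ : Set Z) = ∅ := by
  simp [derivedSet, AccPt, Set.eq_empty_iff_forall_notMem, not_neBot]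

private lemma derivedSet_biUnion' {Z ι : Type*} [TopologicalSpace Z] [DecidableEq ι]
    (s : Finset ι) (f : ι → Set Z) :
    derivedSet (⋃ i ∈ s, f i) = ⋃ i ∈ s, derivedSet (f i) := by
  induction s using Finset.induction with
  | empty => simp [derivedSet_empty']
  | insert _ _ h ih => simp [Finset.set_biUnion_insert, derivedSet_union, ih]

private lemma derivedSet_prod' {X Y : Type*} [TopologicalSpace X] [TopologicalSpace Y]
    (A : Set X) (B : Set Y) :
    derivedSet (A ×ˢ B) = (derivedSet A ×ˢ closure B) ∪ (closure A ×ˢ derivedSet B) := by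
  ext ⟨x, y⟩
  constructor
  · intro h
    have hcl : (x, y) ∈ closure (A ×ˢ B) := derivedSet_subset_closure _ h
    rw [closure_prod_eq] at hcl
    by_cases hx : x ∈ derivedSet A
    · exact Or.inl ⟨hx, hcl.2⟩
    · refine Or.inr ⟨hcl.1, ?_⟩
      rw [mem_derivedSet, accPt_iff_nhds] at hx ⊢
      push_neg at hx
      obtain ⟨U, hU, hUA⟩ := hx
      intro V hV
      rw [mem_derivedSet, accPt_iff_nhds] at h
      obtain ⟨⟨a, b⟩, ⟨hab, habAB⟩, hne⟩ := h (U ×ˢ V) (prod_mem_nhds hU hV)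
      refine ⟨b, ⟨hab.2, habAB.2⟩, fun hby => ?_⟩
      have ha : a = x := hUA a ⟨hab.1, habAB.1⟩
      exact hne (by rw [ha, hby])
  · rintro (⟨hx, hy⟩ | ⟨hx, hy⟩)
    · rw [mem_derivedSet, accPt_iff_nhds] at hx ⊢
      intro U hU
      rw [mem_nhds_prod_iff] at hU
      obtain ⟨V, hV, W, hW, hVW⟩ := hU
      obtain ⟨a, ⟨haV, haA⟩, hax⟩ := hx V hV
      obtain ⟨b, hbW, hbB⟩ := mem_closure_iff_nhds.mp hy W hW
      exact ⟨(a, b), ⟨hVW ⟨haV, hbW⟩, ⟨haA, hbB⟩⟩, fun he => hax (congrArg Prod.fst he)⟩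
    · rw [mem_derivedSet, accPt_iff_nhds] at hy ⊢
      intro U hU
      rw [mem_nhds_prod_iff] at hU
      obtain ⟨V, hV, W, hW, hVW⟩ := hU
      obtain ⟨b, ⟨hbW, hbB⟩, hby⟩ := hy W hW
      obtain ⟨a, haV, haA⟩ := mem_closure_iff_nhds.mp hx V hV
      exact ⟨(a, b), ⟨hVW ⟨haV, hbW⟩, ⟨haA, hbB⟩⟩, fun he => hby (congrArg Prod.snd he)⟩

private lemma iterDS_closed {Z : Type*} [TopologicalSpace Z] [T1Space Z] (k : ℕ) :
    IsClosed (derivedSet^[k] (Set.univ : Set Z)) := by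
  cases k with
  | zero => exact isClosed_univ
  | succ k => rw [Function.iterate_succ_apply']; exact isClosed_derivedSet _

private lemma iterDS_prod {X Y : Type*} [TopologicalSpace X] [TopologicalSpace Y]
    [T1Space X] [T1Space Y] (k : ℕ) :
    derivedSet^[k] (Set.univ : Set (X × Y)) =
      ⋃ i ∈ Finset.range (k+1),
        (derivedSet^[i] (Set.univ : Set X)) ×ˢ (derivedSet^[k-i] (Set.univ : Set Y)) := by
  have hcell : ∀ i j : ℕ,
      derivedSet ((derivedSet^[i] (Set.univ : Set X)) ×ˢ (derivedSet^[j] (Set.univ : Set Y))) =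
        (derivedSet^[i+1] (Set.univ : Set X)) ×ˢ (derivedSet^[j] (Set.univ : Set Y)) ∪
        (derivedSet^[i] (Set.univ : Set X)) ×ˢ (derivedSet^[j+1] (Set.univ : Set Y)) := by
    intro i j
    rw [derivedSet_prod', (iterDS_closed i).closure_eq, (iterDS_closed j).closure_eq,
      ← Function.iterate_succ_apply' derivedSet i, ← Function.iterate_succ_apply' derivedSet j]
  induction k with
  | zero => simp
  | succ k ih =>
    rw [Function.iterate_succ_apply', ih, derivedSet_biUnion']
    apply subset_antisymm
    · intro p hp
      simp only [Set.mem_iUnion, Finset.mem_range] at hp ⊢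
      obtain ⟨i, hi, hp⟩ := hp
      rw [hcell i (k-i)] at hp
      cases hp with
      | inl h =>
        exact ⟨i+1, by omega, by rw [show k+1-(i+1) = k-i by omega]; exact h⟩
      | inr h =>
        exact ⟨i, by omega, by rw [show k+1-i = k-i+1 by omega]; exact h⟩
    · intro p hp
      simp only [Set.mem_iUnion, Finset.mem_range] at hp ⊢
      obtain ⟨j, hj, hp⟩ := hp
      cases j with
      | zero =>
        refine ⟨0, by omega, ?_⟩
        rw [show k - 0 = k from rfl, hcell 0 k]
        exact Or.inr (by rw [show k+1-0 = k+1 from rfl] at hp; exact hp)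
      | succ i =>
        refine ⟨i, by omega, ?_⟩
        rw [hcell i (k-i)]
        exact Or.inl (by rw [show k+1-(i+1) = k-i by omega] at hp; exact hp)
private lemma iterDS_succ_subset {Z : Type*} [TopologicalSpace Z] (k : ℕ) :
    derivedSet^[k+1] (Set.univ : Set Z) ⊆ derivedSet^[k] Set.univ := by
  induction k with
  | zero => exact Set.subset_univ _
  | succ k ih =>
    calc derivedSet^[k+1+1] (Set.univ : Set Z)
        = derivedSet (derivedSet^[k+1] Set.univ) := Function.iterate_succ_apply' _ _ _
      _ ⊆ derivedSet (derivedSet^[k] Set.univ) := derivedSet_mono _ _ ih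
      _ = derivedSet^[k+1] Set.univ := (Function.iterate_succ_apply' _ _ _).symm

private lemma iterDS_anti {Z : Type*} [TopologicalSpace Z] {i j : ℕ} (h : i ≤ j) :
    derivedSet^[j] (Set.univ : Set Z) ⊆ derivedSet^[i] Set.univ := by
  induction j with
  | zero => simp_all
  | succ j ih =>
    rcases Nat.eq_or_lt_of_le h with rfl | h'
    · exact subset_rfl
    · exact (iterDS_succ_subset j).trans (ih (Nat.lt_succ_iff.mp h'))

private lemma iterDS_stable {Z : Type*} [TopologicalSpace Z] {r : ℕ}
    (h : derivedSet^[r+1] (Set.univ : Set Z) = derivedSet^[r+2] Set.univ)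
    {k : ℕ} (hk : r + 1 ≤ k) :
    derivedSet^[k] (Set.univ : Set Z) = derivedSet^[r+1] Set.univ := by
  induction k with
  | zero => omega
  | succ k ih =>
    rcases Nat.eq_or_lt_of_le hk with he | h'
    · rw [← he]
    · have hk' : r + 1 ≤ k := Nat.lt_succ_iff.mp h'
      rw [Function.iterate_succ_apply', ih hk']
      exact (Function.iterate_succ_apply' derivedSet (r+1) Set.univ).symm.trans h.symm

/-- If `X` has Cantor–Bendixson rank `n+1` and `Y` has Cantor–Bendixson
rank `m+1` (both Hausdorff), then `X × Y` has Cantor–Bendixson rank `n+m+1`. -/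
theorem statement14 (X Y : Type*) [TopologicalSpace X] [TopologicalSpace Y]
    [T2Space X] [T2Space Y] (n m : ℕ)
    (hX₁ : derivedSet^[n] (Set.univ : Set X) ≠ derivedSet^[n + 1] (Set.univ : Set X))
    (hX₂ : derivedSet^[n + 1] (Set.univ : Set X) = derivedSet^[n + 2] (Set.univ : Set X))
    (hY₁ : derivedSet^[m] (Set.univ : Set Y) ≠ derivedSet^[m + 1] (Set.univ : Set Y))
    (hY₂ : derivedSet^[m + 1] (Set.univ : Set Y) = derivedSet^[m + 2] (Set.univ : Set Y)) :
    derivedSet^[n + m] (Set.univ : Set (X × Y)) ≠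
        derivedSet^[n + m + 1] (Set.univ : Set (X × Y)) ∧
      derivedSet^[n + m + 1] (Set.univ : Set (X × Y)) =
        derivedSet^[n + m + 2] (Set.univ : Set (X × Y)) := by
  -- stability facts
  have hXs : ∀ {k : ℕ}, n + 1 ≤ k →
      derivedSet^[k] (Set.univ : Set X) = derivedSet^[n+1] Set.univ :=
    fun {k} hk => iterDS_stable hX₂ hk
  have hYs : ∀ {k : ℕ}, m + 1 ≤ k →
      derivedSet^[k] (Set.univ : Set Y) = derivedSet^[m+1] Set.univ :=
    fun {k} hk => iterDS_stable hY₂ hk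
  constructor
  · -- the ranks differ at n+m
    obtain ⟨x, hxn, hxn1⟩ := Set.exists_of_ssubset
      (HasSubset.Subset.ssubset_of_ne (iterDS_succ_subset n) hX₁.symm)
    obtain ⟨y, hym, hym1⟩ := Set.exists_of_ssubset
      (HasSubset.Subset.ssubset_of_ne (iterDS_succ_subset m) hY₁.symm)
    intro hEq
    have hmem : (x, y) ∈ derivedSet^[n+m] (Set.univ : Set (X × Y)) := by
      rw [iterDS_prod]
      simp only [Set.mem_iUnion, Finset.mem_range]
      exact ⟨n, by omega, hxn, by rw [show n + m - n = m by omega]; exact hym⟩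
    rw [hEq, iterDS_prod] at hmem
    simp only [Set.mem_iUnion, Finset.mem_range] at hmem
    obtain ⟨i, hi, hx', hy'⟩ := hmem
    rcases le_or_gt i n with h | h
    · exact hym1 (iterDS_anti (show m + 1 ≤ n + m + 1 - i by omega) hy')
    · exact hxn1 (iterDS_anti (show n + 1 ≤ i by omega) hx')
  · -- stability at n+m+1
    rw [iterDS_prod, iterDS_prod]
    apply subset_antisymm
    · intro p hp
      simp only [Set.mem_iUnion, Finset.mem_range] at hp ⊢
      obtain ⟨i, hi, hx', hy'⟩ := hp
      rcases le_or_gt i n with h | h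
      · refine ⟨i, by omega, hx', ?_⟩
        rw [hYs (show m + 1 ≤ n + m + 2 - i by omega)]
        rw [hYs (show m + 1 ≤ n + m + 1 - i by omega)] at hy'
        exact hy'
      · refine ⟨i + 1, by omega, ?_, ?_⟩
        · rw [hXs (show n + 1 ≤ i + 1 by omega)]
          rw [hXs (show n + 1 ≤ i by omega)] at hx'
          exact hx'
        · rw [show n + m + 2 - (i + 1) = n + m + 1 - i by omega]
          exact hy'
    · intro p hp
      simp only [Set.mem_iUnion, Finset.mem_range] at hp ⊢
      obtain ⟨j, hj, hx', hy'⟩ := hp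
      cases j with
      | zero =>
        refine ⟨0, by omega, hx', ?_⟩
        rw [hYs (show m + 1 ≤ n + m + 1 - 0 by omega)]
        rw [hYs (show m + 1 ≤ n + m + 2 - 0 by omega)] at hy'
        exact hy'
      | succ i =>
        refine ⟨i, by omega, iterDS_succ_subset i hx', ?_⟩
        rw [show n + m + 1 - i = n + m + 2 - (i + 1) by omega]
        exact hy'
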